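/- Assume W is finite and that Lusztig's Conjectures P4 and P9 hold for (W,S,φ). Then every left cellular pair is strongly left cellular, and every right cellular pair is strongly right cellular. -/

import Mathlib

/-!
At `v = 1` the Hecke algebra of a finite Coxeter group becomes the group ring `ℤ[W]`, whose
trace form `(x, y) ↦ Tr(L_{xy})` has Gram matrix `|W|` times a permutation matrix. Hence the
Gram determinant of the trace form of `H` in the basis `(T_w)` is nonzero, i.e. `H` is
semisimple over the fraction field of `A`. This forces, for every `z`, some `w` such that `C_z`
occurs in `C_z C_w C_z`: otherwise, taking `D` with `Tr(L_{xD}) = det · (C_z-coordinate of x)`,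
the element `C_z D C_z` is orthogonal to everything, so `C_z D` squares to zero although its
trace is `det ≠ 0`. Expanding `C_z C_w C_z` in the basis `(C_x)` gives `m ∼_L z` with `C_z`
occurring in `C_z C_m`. A left cellular pair `(δ, μ)` preserves such coefficients up to sign,
so `δ z` occurs in `C_z C_{δ m}`, i.e. `δ z ≤_R z`; the same argument at `δ z` inside the left
cell `δ(Γ)` gives `z ≤_R δ z`. Right cellular pairs are symmetric.
-/

open scoped Classical

noncomputable section

namespace CellsCacti

/-- The group algebra `A = ℤ[𝔄]` of a totally ordered abelian group `𝔄`,
written exponentially: `A = ⊕_{a ∈ 𝔄} ℤ vᵃ`. -/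
abbrev GA (𝔄 : Type*) [AddCommGroup 𝔄] [LinearOrder 𝔄] [IsOrderedAddMonoid 𝔄] := AddMonoidAlgebra ℤ 𝔄

variable {𝔄 : Type*} [AddCommGroup 𝔄] [LinearOrder 𝔄] [IsOrderedAddMonoid 𝔄]

/-- The element `vᵃ` of `A = ℤ[𝔄]`. -/
def v (a : 𝔄) : GA 𝔄 := AddMonoidAlgebra.single a 1

/-- The bar involution of `A = ℤ[𝔄]`, determined by `vᵃ ↦ v⁻ᵃ`. -/
def Abar : GA 𝔄 ≃ₐ[ℤ] GA 𝔄 := AddMonoidAlgebra.domCongr ℤ ℤ (AddEquiv.neg 𝔄)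

/-- `A_{<0} = ⊕_{a<0} ℤ vᵃ`, as a predicate on elements of `A`. -/
def Aneg (a : GA 𝔄) : Prop := ∀ γ ∈ a.coeff.support, γ < (0 : 𝔄)

variable {B : Type*} {W : Type*} [Group W] {M : CoxeterMatrix B}

/-- The Iwahori–Hecke algebra `H = H(W,S,φ)` of a Coxeter system `(W,S)` (encoded by
a Mathlib `CoxeterSystem`) with weight function `φ`, together with its standard basis
`(T_w)`, the bar involution, and the Kazhdan–Lusztig basis `(C_w)`.  `H` is a ring and a
module over `A = ℤ[𝔄]`, the two structures being compatible. -/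
structure Hecke (cs : CoxeterSystem M W) (𝔄 : Type*) [AddCommGroup 𝔄] [LinearOrder 𝔄] [IsOrderedAddMonoid 𝔄]
    (φ : B → 𝔄) (H : Type*) [Ring H] [Module (GA 𝔄) H] : Type _ where
  /-- `φ` is a positive weight function. -/
  φ_pos : ∀ i : B, 0 < φ i
  /-- `φ` is constant on conjugacy classes of simple reflections. -/
  φ_conj : ∀ i j : B, (∃ w : W, w * cs.simple i * w⁻¹ = cs.simple j) → φ i = φ j
  /-- Scalars commute with left multiplication. -/
  smul_mul : ∀ (a : GA 𝔄) (x y : H), (a • x) * y = a • (x * y)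
  /-- Scalars commute with right multiplication. -/
  mul_smul : ∀ (a : GA 𝔄) (x y : H), x * (a • y) = a • (x * y)
  /-- The standard basis `(T_w)_{w ∈ W}` of `H`. -/
  T : Module.Basis W (GA 𝔄) H
  T_one : T 1 = 1
  /-- `T_w T_{w'} = T_{w w'}` when lengths add. -/
  T_mul : ∀ w w' : W, cs.length (w * w') = cs.length w + cs.length w' →
    T w * T w' = T (w * w')
  /-- The quadratic relation `(T_s - v^{φ(s)})(T_s + v^{-φ(s)}) = 0`. -/
  T_quad : ∀ i : B,
    (T (cs.simple i) - v (φ i) • 1) * (T (cs.simple i) + v (-(φ i)) • 1) = 0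
  /-- The bar involution of `H`, an `Abar`-semilinear involutive ring automorphism
  with `bar T_w = T_{w⁻¹}⁻¹` (equivalently, determined by its values on the `T_s`). -/
  bar : H ≃+ H
  bar_mul : ∀ x y : H, bar (x * y) = bar x * bar y
  bar_smul : ∀ (a : GA 𝔄) (x : H), bar (a • x) = Abar a • bar x
  bar_invol : ∀ x : H, bar (bar x) = x
  bar_T : ∀ i : B, bar (T (cs.simple i)) = T (cs.simple i) + (v (-(φ i)) - v (φ i)) • 1
  /-- The Kazhdan–Lusztig basis `(C_w)_{w ∈ W}` of `H`. -/
  C : Module.Basis W (GA 𝔄) H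
  /-- Each `C_w` is invariant under the bar involution. -/
  C_bar : ∀ w : W, bar (C w) = C w
  /-- `C_w ≡ T_w` modulo `H_{<0} = ⊕_w A_{<0} T_w`. -/
  C_T : ∀ w u : W, Aneg (T.repr (C w - T w) u)

namespace Hecke

variable {cs : CoxeterSystem M W} {φ : B → 𝔄} {H : Type*} [Ring H] [Module (GA 𝔄) H]

/-- The standard parabolic subgroup `W_I`, as a subset of `W`. -/
def parab (cs : CoxeterSystem M W) (I : Set B) : Set W :=
  (Subgroup.closure (cs.simple '' I) : Subgroup W)

/-- `x ∈ X_I`: `x` has minimal length in the coset `x W_I`. -/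
def IsMinRep (cs : CoxeterSystem M W) (I : Set B) (x : W) : Prop :=
  ∀ u ∈ parab cs I, cs.length x ≤ cs.length (x * u)

/-- The `A`-span of the `C_w` for `w` in a subset `P ⊆ W`; for `P = W_I` this is the
parabolic subalgebra `H_I` (whose Kazhdan–Lusztig basis is `(C_w)_{w ∈ W_I}`). -/
def Cspan (h : Hecke cs 𝔄 φ H) (P : Set W) : Submodule (GA 𝔄) H :=
  Submodule.span (GA 𝔄) (h.C '' P)

/-- The `A`-span of the `T_w` for `w` in a subset `P ⊆ W`; for `P = W_I` this is the
parabolic subalgebra `H_I`. -/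
def Tspan (h : Hecke cs 𝔄 φ H) (P : Set W) : Submodule (GA 𝔄) H :=
  Submodule.span (GA 𝔄) (h.T '' P)

/-- The preorder `≤_L` of `(W_P, P, φ_P)` (take `P = Set.univ` for that of `(W,S,φ)`):
the finest preorder such that each `⊕_{x ≤_L w} A C_x` is a left ideal. -/
def leftLE (h : Hecke cs 𝔄 φ H) (P : Set W) : W → W → Prop :=
  Relation.ReflTransGen
    (fun x y => x ∈ P ∧ y ∈ P ∧ ∃ a ∈ h.Cspan P, h.C.repr (a * h.C y) x ≠ 0)

/-- The preorder `≤_R`. -/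
def rightLE (h : Hecke cs 𝔄 φ H) (P : Set W) : W → W → Prop :=
  Relation.ReflTransGen
    (fun x y => x ∈ P ∧ y ∈ P ∧ ∃ a ∈ h.Cspan P, h.C.repr (h.C y * a) x ≠ 0)

/-- The preorder `≤_LR`. -/
def lrLE (h : Hecke cs 𝔄 φ H) (P : Set W) : W → W → Prop :=
  Relation.ReflTransGen
    (fun x y => x ∈ P ∧ y ∈ P ∧
      ∃ a ∈ h.Cspan P, ∃ b ∈ h.Cspan P, h.C.repr (a * h.C y * b) x ≠ 0)

/-- The equivalence `∼_L`; its classes are the left cells. -/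
def leftEquiv (h : Hecke cs 𝔄 φ H) (P : Set W) (x y : W) : Prop :=
  h.leftLE P x y ∧ h.leftLE P y x

/-- The equivalence `∼_R`; its classes are the right cells. -/
def rightEquiv (h : Hecke cs 𝔄 φ H) (P : Set W) (x y : W) : Prop :=
  h.rightLE P x y ∧ h.rightLE P y x

/-- The equivalence `∼_LR`; its classes are the two-sided cells. -/
def lrEquiv (h : Hecke cs 𝔄 φ H) (P : Set W) (x y : W) : Prop :=
  h.lrLE P x y ∧ h.lrLE P y x

/-- `Γ` is a left cell. -/
def IsLeftCell (h : Hecke cs 𝔄 φ H) (P : Set W) (Γ : Set W) : Prop :=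
  ∃ w ∈ P, Γ = {x | h.leftEquiv P x w}

/-- `Γ` is a right cell. -/
def IsRightCell (h : Hecke cs 𝔄 φ H) (P : Set W) (Γ : Set W) : Prop :=
  ∃ w ∈ P, Γ = {x | h.rightEquiv P x w}

/-- A sign map `W → {1,-1}`. -/
def IsSignMap (μ : W → ℤ) : Prop := ∀ w : W, μ w = 1 ∨ μ w = -1

/-- `(δ,μ)` is a *left cellular pair* for `(W_P, P, φ_P)` (Definition 4.1 of the paper;
take `P = Set.univ` for `(W,S,φ)`):  for every left cell `Γ`, (LC1) `δ(Γ)` is a left cell,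
and (LC2) the `A`-linear map `H^L[Γ] → H^L[δ(Γ)]`, `c_w^L ↦ μ_w c_{δ(w)}^L`, is an
isomorphism of left `H`-modules.  Condition (LC2) is expressed concretely: `δ` is injective
on `Γ` (bijectivity of the map) and for every `a ∈ H` the coefficient of `c_{w'}` in
`a ⬝ c_w` agrees, up to the signs, with that of `c_{δ(w')}` in `a ⬝ c_{δ(w)}`
(`H`-equivariance in the cell modules). -/
def IsLeftCellularPair (h : Hecke cs 𝔄 φ H) (P : Set W) (δ : W → W) (μ : W → ℤ) : Prop :=
  IsSignMap μ ∧
  ∀ Γ : Set W, h.IsLeftCell P Γ →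
    h.IsLeftCell P (δ '' Γ) ∧ Set.InjOn δ Γ ∧
    ∀ a ∈ h.Cspan P, ∀ w ∈ Γ, ∀ w' ∈ Γ,
      h.C.repr (a * h.C w) w' = (μ w * μ w') • h.C.repr (a * h.C (δ w)) (δ w')

/-- `(δ,μ)` is a *right cellular pair*. -/
def IsRightCellularPair (h : Hecke cs 𝔄 φ H) (P : Set W) (δ : W → W) (μ : W → ℤ) : Prop :=
  IsSignMap μ ∧
  ∀ Γ : Set W, h.IsRightCell P Γ →
    h.IsRightCell P (δ '' Γ) ∧ Set.InjOn δ Γ ∧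
    ∀ a ∈ h.Cspan P, ∀ w ∈ Γ, ∀ w' ∈ Γ,
      h.C.repr (h.C w * a) w' = (μ w * μ w') • h.C.repr (h.C (δ w) * a) (δ w')

/-- `(δ,μ)` is a *strongly left cellular pair*: left cellular, and (LC3) `δ(w) ∼_R w`. -/
def IsStronglyLeftCellularPair (h : Hecke cs 𝔄 φ H) (P : Set W) (δ : W → W) (μ : W → ℤ) :
    Prop :=
  h.IsLeftCellularPair P δ μ ∧ ∀ w ∈ P, h.rightEquiv P (δ w) w

/-- `(δ,μ)` is a *strongly right cellular pair*: right cellular, and `δ(w) ∼_L w`. -/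
def IsStronglyRightCellularPair (h : Hecke cs 𝔄 φ H) (P : Set W) (δ : W → W) (μ : W → ℤ) :
    Prop :=
  h.IsRightCellularPair P δ μ ∧ ∀ w ∈ P, h.leftEquiv P (δ w) w

/-- `a` is Lusztig's `a`-function of `(W_P, P, φ_P)`:
`a(z) = max_{x,y ∈ W_P} deg h_{x,y,z}`. -/
def IsAFun (h : Hecke cs 𝔄 φ H) (P : Set W) (a : W → 𝔄) : Prop :=
  ∀ z ∈ P, IsGreatest
    {d : 𝔄 | ∃ x ∈ P, ∃ y ∈ P, d ∈ (h.C.repr (h.C x * h.C y) z).coeff.support} (a z)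

/-- Lusztig's Conjecture P1 for `(W_P, P, φ_P)`: `a(z) ≤ Δ(z) = -val p*_{1,z}`. -/
def ConjP1 (h : Hecke cs 𝔄 φ H) (P : Set W) (a : W → 𝔄) : Prop :=
  ∀ z ∈ P, ∃ d ∈ (h.T.repr (h.C z) 1).coeff.support, d ≤ -(a z)

/-- Lusztig's Conjecture P4 for `(W_P, P, φ_P)`: `z' ≤_LR z ⟹ a(z') ≥ a(z)`. -/
def ConjP4 (h : Hecke cs 𝔄 φ H) (P : Set W) (a : W → 𝔄) : Prop :=
  ∀ z z' : W, z ∈ P → z' ∈ P → h.lrLE P z' z → a z ≤ a z'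

/-- Lusztig's Conjecture P8 for `(W_P, P, φ_P)`: `h_{x,y,z} ≠ 0` implies
`x ∼_L y⁻¹`, `y ∼_L z` and `x ∼_R z`. -/
def ConjP8 (h : Hecke cs 𝔄 φ H) (P : Set W) : Prop :=
  ∀ x y z : W, x ∈ P → y ∈ P → z ∈ P → h.C.repr (h.C x * h.C y) z ≠ 0 →
    h.leftEquiv P x y⁻¹ ∧ h.leftEquiv P y z ∧ h.rightEquiv P x z

/-- Lusztig's Conjecture P9 for `(W_P, P, φ_P)`: `z' ≤_L z` and `a(z') = a(z)` imply
`z' ∼_L z`. -/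
def ConjP9 (h : Hecke cs 𝔄 φ H) (P : Set W) (a : W → 𝔄) : Prop :=
  ∀ z z' : W, z ∈ P → z' ∈ P → h.leftLE P z' z → a z' = a z → h.leftEquiv P z' z

/-- `w0` is the longest element of `W_P`. -/
def IsLongest (cs : CoxeterSystem M W) (P : Set W) (w0 : W) : Prop :=
  w0 ∈ P ∧ ∀ u ∈ P, cs.length u ≤ cs.length w0

/-- The characterization of the Mathas–Lusztig maps `λ_I`, `ρ_I`, `η^I` of
`(W_I, I, φ_I)` (Theorem 4.3 of the paper), for `P = W_I`, `wI` the longest element of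
`W_I` and `aI` Lusztig's `a`-function of `(W_I, I, φ_I)`:
`v^{α_I(w)} T_{w_I} C_w ≡ η^I_w C_{ρ_I(w)}` and
`v^{α_I(w)} C_w T_{w_I} ≡ η^I_w C_{λ_I(w)}` modulo `H_I^{<_LR w}`, where
`α_I(w) = a_I(w_I w) - a_I(w)`. -/
def IsMLTriple (h : Hecke cs 𝔄 φ H) (P : Set W) (wI : W) (aI : W → 𝔄)
    (lam rho : W → W) (η : W → ℤ) : Prop :=
  IsSignMap η ∧
  (∀ w ∈ P, lam w ∈ P ∧ rho w ∈ P) ∧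
  ∀ w ∈ P,
    v (aI (wI * w) - aI w) • (h.T wI * h.C w) - η w • h.C (rho w) ∈
      Submodule.span (GA 𝔄)
        (h.C '' {u | u ∈ P ∧ h.lrLE P u w ∧ ¬ h.lrLE P w u}) ∧
    v (aI (wI * w) - aI w) • (h.C w * h.T wI) - η w • h.C (lam w) ∈
      Submodule.span (GA 𝔄)
        (h.C '' {u | u ∈ P ∧ h.lrLE P u w ∧ ¬ h.lrLE P w u})

end Hecke

section TraceForm

open Matrix
open LinearMap (BilinForm)

variable (R S : Type*) [CommRing R] [Ring S] [Algebra R S]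

def mulLeftTrace : S →ₗ[R] R := LinearMap.trace R S ∘ₗ LinearMap.mul R S

def mulLeftTraceForm : BilinForm R S := (LinearMap.mul R S).compr₂ (mulLeftTrace R S)

variable {R S}

lemma mulLeftTrace_apply (x : S) :
    mulLeftTrace R S x = LinearMap.trace R S (LinearMap.mulLeft R x) := rfl

lemma mulLeftTraceForm_apply (x y : S) : mulLeftTraceForm R S x y = mulLeftTrace R S (x * y) :=
  rfl

lemma mulLeftTrace_mul_comm (x y : S) : mulLeftTrace R S (x * y) = mulLeftTrace R S (y * x) := by
  simp only [mulLeftTrace_apply, LinearMap.mulLeft_mul]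
  exact LinearMap.trace_mul_comm R _ _

lemma mulLeftTrace_eq_zero_of_mul_self_eq_zero [IsDomain R] [Module.Free R S] [Module.Finite R S]
    {e : S} (he : e * e = 0) : mulLeftTrace R S e = 0 := by
  have hnil : IsNilpotent (LinearMap.mulLeft R e) :=
    ⟨2, by rw [LinearMap.pow_mulLeft, sq, he, LinearMap.mulLeft_zero_eq_zero]⟩
  exact (LinearMap.isNilpotent_trace_of_isNilpotent hnil).eq_zero

variable {ι : Type*} [Fintype ι] [DecidableEq ι]

lemma exists_mulLeftTrace_mul_eq_det_mul (b : Module.Basis ι R S) (f : S →ₗ[R] R) :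
    ∃ D : S, ∀ y : S, mulLeftTrace R S (y * D) =
      (LinearMap.BilinForm.toMatrix b (mulLeftTraceForm R S)).det * f y := by
  set G := LinearMap.BilinForm.toMatrix b (mulLeftTraceForm R S)
  set d := G.adjugate *ᵥ fun i => f (b i)
  refine ⟨∑ j, d j • b j, fun y => ?_⟩
  suffices (mulLeftTraceForm R S).flip (∑ j, d j • b j) = G.det • f from
    LinearMap.congr_fun this y
  refine b.ext fun i => ?_
  have hGd : G *ᵥ d = G.det • fun i => f (b i) := by
    rw [Matrix.mulVec_mulVec, Matrix.mul_adjugate, Matrix.smul_mulVec, Matrix.one_mulVec]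
  simpa [Matrix.mulVec, dotProduct, G, LinearMap.BilinForm.toMatrix_apply, mul_comm]
    using congr_fun hGd i

theorem exists_apply_mul_basis_mul_ne_zero [IsDomain R] (b : Module.Basis ι R S)
    (hb : (LinearMap.BilinForm.toMatrix b (mulLeftTraceForm R S)).det ≠ 0) (c : Module.Basis ι R S)
    (f : S →ₗ[R] R) {x : S} (hx : f x ≠ 0) : ∃ i, f (x * c i * x) ≠ 0 := by
  have : Module.Free R S := .of_basis b
  have : Module.Finite R S := .of_basis b
  by_contra! hzero
  have hxax : ∀ a, f (x * a * x) = 0 := by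
    have : f ∘ₗ LinearMap.mulRight R x ∘ₗ LinearMap.mulLeft R x = 0 :=
      c.ext fun i => by simpa using hzero i
    exact fun a => by simpa using LinearMap.congr_fun this a
  obtain ⟨D, hD⟩ := exists_mulLeftTrace_mul_eq_det_mul b f
  have hxDx : x * D * x = 0 := by
    refine (LinearMap.BilinForm.nondegenerate_of_det_ne_zero _ b hb).1 _ fun a => ?_
    rw [mulLeftTraceForm_apply, show x * D * x * a = x * D * (x * a) by noncomm_ring,
      mulLeftTrace_mul_comm, ← mul_assoc, hD, hxax, mul_zero]
  have htr := mulLeftTrace_eq_zero_of_mul_self_eq_zero (R := R)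
    (show x * D * (x * D) = 0 by rw [← mul_assoc, hxDx, zero_mul])
  rw [hD] at htr
  exact hx ((mul_eq_zero.mp htr).resolve_left hb)

end TraceForm

section BasisCoefficients

variable {R S ι : Type*} [CommRing R] [Ring S] [Module R S]

lemma exists_repr_ne_zero_of_repr_mul_ne_zero_right [SMulCommClass R S S]
    [NoZeroDivisors R] (c : Module.Basis ι R S) {x y : S} {k : ι} (hne : c.repr (x * y) k ≠ 0) :
    ∃ j, c.repr y j ≠ 0 ∧ c.repr (x * c j) k ≠ 0 := by
  rw [← c.linearCombination_repr y, Finsupp.linearCombination_apply, Finsupp.mul_sum,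
    map_finsuppSum, Finsupp.sum_apply] at hne
  obtain ⟨j, -, hj⟩ := Finset.exists_ne_zero_of_sum_ne_zero hne
  simp only [mul_smul_comm, map_smul, Finsupp.smul_apply, smul_eq_mul] at hj
  exact ⟨j, left_ne_zero_of_mul hj, right_ne_zero_of_mul hj⟩

lemma exists_repr_ne_zero_of_repr_mul_ne_zero_left [IsScalarTower R S S]
    [NoZeroDivisors R] (c : Module.Basis ι R S) {x y : S} {k : ι} (hne : c.repr (y * x) k ≠ 0) :
    ∃ j, c.repr y j ≠ 0 ∧ c.repr (c j * x) k ≠ 0 := by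
  rw [← c.linearCombination_repr y, Finsupp.linearCombination_apply, Finsupp.sum_mul,
    map_finsuppSum, Finsupp.sum_apply] at hne
  obtain ⟨j, -, hj⟩ := Finset.exists_ne_zero_of_sum_ne_zero hne
  simp only [smul_mul_assoc, map_smul, Finsupp.smul_apply, smul_eq_mul] at hj
  exact ⟨j, left_ne_zero_of_mul hj, right_ne_zero_of_mul hj⟩

end BasisCoefficients

namespace Hecke

variable {cs : CoxeterSystem M W} {φ : B → 𝔄} {H : Type*} [Ring H] [Module (GA 𝔄) H]

section Specialization

/-- The specialization `v ↦ 1`, which turns `H` into the group ring `ℤ[W]`. -/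
def specOne : GA 𝔄 →+* ℤ := (AddMonoidAlgebra.lift ℤ ℤ 𝔄 1).toRingHom

@[simp] lemma specOne_single (a : 𝔄) (n : ℤ) : specOne (AddMonoidAlgebra.single a n) = n := by
  simp [specOne]

@[simp] lemma specOne_v (a : 𝔄) : specOne (v a) = 1 := specOne_single a 1

lemma T_simple_mul_T_simple (h : Hecke cs 𝔄 φ H) (i : B) :
    h.T (cs.simple i) * h.T (cs.simple i) = 1 + (v (φ i) - v (-(φ i))) • h.T (cs.simple i) := by
  have hv : v (φ i) * v (-(φ i)) = 1 := by
    rw [v, v, AddMonoidAlgebra.single_mul_single, add_neg_cancel, mul_one]; rfl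
  have hq := h.T_quad i
  rw [sub_mul, mul_add, mul_add, h.mul_smul, h.smul_mul, h.smul_mul, h.mul_smul, one_mul,
    mul_one, mul_one, smul_smul, hv, one_smul, sub_eq_zero] at hq
  rw [eq_sub_of_add_eq hq, sub_smul]
  abel

lemma T_mul_T_simple_of_not_isRightDescent (h : Hecke cs 𝔄 φ H) {u : W} {i : B}
    (hi : ¬ cs.IsRightDescent u i) : h.T u * h.T (cs.simple i) = h.T (u * cs.simple i) :=
  h.T_mul _ _ (by rw [cs.not_isRightDescent_iff.mp hi, cs.length_simple])

lemma T_mul_T_simple_of_isRightDescent (h : Hecke cs 𝔄 φ H) {u : W} {i : B}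
    (hi : cs.IsRightDescent u i) :
    h.T u * h.T (cs.simple i) = h.T (u * cs.simple i) + (v (φ i) - v (-(φ i))) • h.T u := by
  have hu : u * cs.simple i * cs.simple i = u := by simp [mul_assoc]
  have hT : h.T (u * cs.simple i) * h.T (cs.simple i) = h.T u := by
    rw [h.T_mul _ _ (by rw [hu, cs.length_simple]; have := cs.isRightDescent_iff.mp hi; omega), hu]
  rw [← hT, mul_assoc, T_simple_mul_T_simple, mul_add, mul_one, h.mul_smul]

lemma specOne_repr_T_mul_T_simple (h : Hecke cs 𝔄 φ H) (u w : W) (i : B) :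
    specOne (h.T.repr (h.T u * h.T (cs.simple i)) w) =
      specOne (h.T.repr (h.T u) (w * cs.simple i)) := by
  have hsingle : Finsupp.single (u * cs.simple i) (1 : GA 𝔄) w =
      Finsupp.single u 1 (w * cs.simple i) := by
    simp only [Finsupp.single_apply, ← eq_mul_inv_iff_mul_eq, cs.inv_simple]
  by_cases hi : cs.IsRightDescent u i
  · simp only [h.T_mul_T_simple_of_isRightDescent hi, map_add, map_smul, h.T.repr_self,
      Finsupp.add_apply, Finsupp.smul_apply, smul_eq_mul, map_mul, map_sub, specOne_v, sub_self,
      zero_mul, add_zero, hsingle]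
  · simp [h.T_mul_T_simple_of_not_isRightDescent hi, hsingle]

lemma specOne_repr_mul_T_simple (h : Hecke cs 𝔄 φ H) (x : H) (w : W) (i : B) :
    specOne (h.T.repr (x * h.T (cs.simple i)) w) = specOne (h.T.repr x (w * cs.simple i)) := by
  have hx : x ∈ Submodule.span (GA 𝔄) (Set.range h.T) := h.T.span_eq ▸ Submodule.mem_top
  induction hx using Submodule.span_induction with
  | mem y hy =>
    obtain ⟨u, rfl⟩ := hy
    exact h.specOne_repr_T_mul_T_simple u w i
  | zero => simp
  | add y z _ _ hy hz => simp [add_mul, hy, hz]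
  | smul a y _ hy => simp [h.smul_mul, hy]

lemma specOne_repr_mul_T (h : Hecke cs 𝔄 φ H) (x : H) (y w : W) :
    specOne (h.T.repr (x * h.T y) w) = specOne (h.T.repr x (w * y⁻¹)) := by
  induction hn : cs.length y using Nat.strong_induction_on generalizing x y w with
  | _ n ih =>
    rcases eq_or_ne y 1 with rfl | hy
    · simp [h.T_one]
    obtain ⟨i, hi⟩ := cs.exists_rightDescent_of_ne_one hy
    have hlen := cs.isRightDescent_iff.mp hi
    have hT : h.T y = h.T (y * cs.simple i) * h.T (cs.simple i) := by
      rw [h.T_mul _ _ (by simp [mul_assoc, cs.length_simple]; omega)]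
      simp [mul_assoc]
    rw [hT, ← mul_assoc, specOne_repr_mul_T_simple, ih _ (by omega) x _ _ rfl]
    simp [mul_assoc]

end Specialization

section HeckeTraceForm

abbrev algebra (h : Hecke cs 𝔄 φ H) : Algebra (GA 𝔄) H := Algebra.ofModule h.smul_mul h.mul_smul

variable [Fintype W]

lemma specOne_mulLeftTrace_T_mul_T (h : Hecke cs 𝔄 φ H) (u w : W) :
    letI := h.algebra
    specOne (mulLeftTrace (GA 𝔄) H (h.T u * h.T w)) = if u = w⁻¹ then Fintype.card W else 0 := by
  let := h.algebra
  rw [mulLeftTrace_apply, LinearMap.trace_eq_matrix_trace _ h.T, Matrix.trace, map_sum]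
  simp only [Matrix.diag_apply, LinearMap.toMatrix_apply, LinearMap.mulLeft_apply,
    specOne_repr_mul_T, mul_inv_cancel, one_mul, h.T.repr_self, Finsupp.single_apply]
  split_ifs <;> simp

lemma det_toMatrix_mulLeftTraceForm_ne_zero (h : Hecke cs 𝔄 φ H) :
    letI := h.algebra
    (LinearMap.BilinForm.toMatrix h.T (mulLeftTraceForm (GA 𝔄) H)).det ≠ 0 := by
  let := h.algebra
  intro hdet
  have hspec : specOne.mapMatrix (LinearMap.BilinForm.toMatrix h.T (mulLeftTraceForm (GA 𝔄) H)) =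
      (Fintype.card W : ℤ) • (Equiv.inv W).permMatrix ℤ := by
    ext u w
    simp [LinearMap.BilinForm.toMatrix_apply, mulLeftTraceForm_apply,
      specOne_mulLeftTrace_T_mul_T, Equiv.Perm.permMatrix, PEquiv.toMatrix_apply, inv_eq_iff_eq_inv]
  have := congrArg specOne hdet
  rw [RingHom.map_det, hspec, Matrix.det_smul, Matrix.det_permutation, map_zero] at this
  simp at this

end HeckeTraceForm

theorem exists_repr_C_mul_C_mul_C_self_ne_zero (h : Hecke cs 𝔄 φ H) [Finite W] (z : W) :
    ∃ w, h.C.repr (h.C z * h.C w * h.C z) z ≠ 0 := by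
  let := h.algebra
  have := Fintype.ofFinite W
  exact exists_apply_mul_basis_mul_ne_zero h.T h.det_toMatrix_mulLeftTraceForm_ne_zero h.C
    (h.C.coord z) (by simp)

section Cells

variable (h : Hecke cs 𝔄 φ H) {P : Set W}

lemma C_mem_Cspan {w : W} (hw : w ∈ P) : h.C w ∈ h.Cspan P :=
  Submodule.subset_span (Set.mem_image_of_mem _ hw)

lemma leftLE_of_repr_mul_ne_zero {x y : W} (a : H) (hne : h.C.repr (a * h.C y) x ≠ 0) :
    h.leftLE Set.univ x y :=
  .single ⟨trivial, trivial, a, by simp [Cspan], hne⟩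

lemma rightLE_of_repr_mul_ne_zero {x y : W} (a : H) (hne : h.C.repr (h.C y * a) x ≠ 0) :
    h.rightLE Set.univ x y :=
  .single ⟨trivial, trivial, a, by simp [Cspan], hne⟩

theorem exists_leftEquiv_repr_C_mul_C_self_ne_zero [Finite W] (z : W) :
    ∃ m, h.leftEquiv Set.univ m z ∧ h.C.repr (h.C z * h.C m) z ≠ 0 := by
  let := h.algebra
  obtain ⟨w, hw⟩ := h.exists_repr_C_mul_C_mul_C_self_ne_zero z
  rw [mul_assoc] at hw
  obtain ⟨m, hm, hzm⟩ := exists_repr_ne_zero_of_repr_mul_ne_zero_right h.C hw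
  exact ⟨m, ⟨h.leftLE_of_repr_mul_ne_zero _ hm, h.leftLE_of_repr_mul_ne_zero _ hzm⟩, hzm⟩

theorem exists_rightEquiv_repr_C_mul_C_self_ne_zero [Finite W] (z : W) :
    ∃ t, h.rightEquiv Set.univ t z ∧ h.C.repr (h.C t * h.C z) z ≠ 0 := by
  let := h.algebra
  obtain ⟨w, hw⟩ := h.exists_repr_C_mul_C_mul_C_self_ne_zero z
  obtain ⟨t, ht, htz⟩ := exists_repr_ne_zero_of_repr_mul_ne_zero_left h.C hw
  exact ⟨t, ⟨h.rightLE_of_repr_mul_ne_zero _ ht, h.rightLE_of_repr_mul_ne_zero _ htz⟩, htz⟩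

end Cells

section CellularPairs

variable {h : Hecke cs 𝔄 φ H} {P : Set W} {δ : W → W} {μ : W → ℤ}

lemma IsLeftCell.eq_setOf_leftEquiv {Γ : Set W} (hΓ : h.IsLeftCell P Γ)
    {y : W} (hy : y ∈ Γ) : Γ = {x | h.leftEquiv P x y} := by
  obtain ⟨w, -, rfl⟩ := hΓ
  ext x
  exact ⟨fun hx => ⟨hx.1.trans hy.2, hy.1.trans hx.2⟩,
    fun hx => ⟨hx.1.trans hy.1, hy.2.trans hx.2⟩⟩

lemma IsRightCell.eq_setOf_rightEquiv {Γ : Set W} (hΓ : h.IsRightCell P Γ)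
    {y : W} (hy : y ∈ Γ) : Γ = {x | h.rightEquiv P x y} := by
  obtain ⟨w, -, rfl⟩ := hΓ
  ext x
  exact ⟨fun hx => ⟨hx.1.trans hy.2, hy.1.trans hx.2⟩,
    fun hx => ⟨hx.1.trans hy.1, hy.2.trans hx.2⟩⟩

lemma IsSignMap.mul_smul_ne_zero_iff {ι R : Type*} [Ring R] {σ : ι → ℤ} (hσ : IsSignMap σ)
    (i j : ι) {r : R} : (σ i * σ j) • r ≠ 0 ↔ r ≠ 0 := by
  have hunit : IsUnit (σ i * σ j) := (Int.isUnit_iff.mpr (hσ i)).mul (Int.isUnit_iff.mpr (hσ j))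
  exact hunit.smul_eq_zero.not

lemma IsLeftCellularPair.repr_mul_C_ne_zero_iff (hp : h.IsLeftCellularPair P δ μ) {Γ : Set W}
    (hΓ : h.IsLeftCell P Γ) {w w' : W} (hw : w ∈ Γ) (hw' : w' ∈ Γ) {a : H} (ha : a ∈ h.Cspan P) :
    h.C.repr (a * h.C w) w' ≠ 0 ↔ h.C.repr (a * h.C (δ w)) (δ w') ≠ 0 := by
  rw [(hp.2 Γ hΓ).2.2 a ha w hw w' hw']
  exact hp.1.mul_smul_ne_zero_iff w w'

lemma IsRightCellularPair.repr_C_mul_ne_zero_iff (hp : h.IsRightCellularPair P δ μ) {Γ : Set W}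
    (hΓ : h.IsRightCell P Γ) {w w' : W} (hw : w ∈ Γ) (hw' : w' ∈ Γ) {a : H} (ha : a ∈ h.Cspan P) :
    h.C.repr (h.C w * a) w' ≠ 0 ↔ h.C.repr (h.C (δ w) * a) (δ w') ≠ 0 := by
  rw [(hp.2 Γ hΓ).2.2 a ha w hw w' hw']
  exact hp.1.mul_smul_ne_zero_iff w w'

variable [Finite W]

theorem IsLeftCellularPair.rightEquiv (hp : h.IsLeftCellularPair Set.univ δ μ) (w : W) :
    h.rightEquiv Set.univ (δ w) w := by
  set Γ := {x | h.leftEquiv Set.univ x w}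
  have hΓ : h.IsLeftCell Set.univ Γ := ⟨w, trivial, rfl⟩
  have hwΓ : w ∈ Γ := ⟨.refl, .refl⟩
  obtain ⟨m, hmΓ, hm⟩ := h.exists_leftEquiv_repr_C_mul_C_self_ne_zero w
  obtain ⟨m', hm'w, hm'⟩ := h.exists_leftEquiv_repr_C_mul_C_self_ne_zero (δ w)
  obtain ⟨s, hsΓ, rfl⟩ : m' ∈ δ '' Γ := by
    rw [(hp.2 Γ hΓ).1.eq_setOf_leftEquiv (Set.mem_image_of_mem δ hwΓ)]
    exact hm'w
  have hC : ∀ x, h.C x ∈ h.Cspan Set.univ := fun _ => h.C_mem_Cspan trivial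
  exact ⟨h.rightLE_of_repr_mul_ne_zero _ ((hp.repr_mul_C_ne_zero_iff hΓ hmΓ hwΓ (hC w)).1 hm),
    h.rightLE_of_repr_mul_ne_zero _ ((hp.repr_mul_C_ne_zero_iff hΓ hsΓ hwΓ (hC (δ w))).2 hm')⟩

theorem IsRightCellularPair.leftEquiv (hp : h.IsRightCellularPair Set.univ δ μ) (w : W) :
    h.leftEquiv Set.univ (δ w) w := by
  set Γ := {x | h.rightEquiv Set.univ x w}
  have hΓ : h.IsRightCell Set.univ Γ := ⟨w, trivial, rfl⟩
  have hwΓ : w ∈ Γ := ⟨.refl, .refl⟩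
  obtain ⟨t, htΓ, ht⟩ := h.exists_rightEquiv_repr_C_mul_C_self_ne_zero w
  obtain ⟨t', ht'w, ht'⟩ := h.exists_rightEquiv_repr_C_mul_C_self_ne_zero (δ w)
  obtain ⟨s, hsΓ, rfl⟩ : t' ∈ δ '' Γ := by
    rw [(hp.2 Γ hΓ).1.eq_setOf_rightEquiv (Set.mem_image_of_mem δ hwΓ)]
    exact ht'w
  have hC : ∀ x, h.C x ∈ h.Cspan Set.univ := fun _ => h.C_mem_Cspan trivial
  exact ⟨h.leftLE_of_repr_mul_ne_zero _ ((hp.repr_C_mul_ne_zero_iff hΓ htΓ hwΓ (hC w)).1 ht),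
    h.leftLE_of_repr_mul_ne_zero _ ((hp.repr_C_mul_ne_zero_iff hΓ hsΓ hwΓ (hC (δ w))).2 ht')⟩

end CellularPairs

theorem prop_strongly_general (h : Hecke cs 𝔄 φ H) [Finite W]
    (δ : W → W) (μ : W → ℤ) :
    (h.IsLeftCellularPair Set.univ δ μ → h.IsStronglyLeftCellularPair Set.univ δ μ) ∧
    (h.IsRightCellularPair Set.univ δ μ → h.IsStronglyRightCellularPair Set.univ δ μ) :=
  ⟨fun hp => ⟨hp, fun w _ => hp.rightEquiv w⟩, fun hp => ⟨hp, fun w _ => hp.leftEquiv w⟩⟩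

/-- **Proposition 4.2** (cells and cacti): assume `W` is finite and that Lusztig's
Conjectures P4 and P9 hold for `(W,S,φ)`.  Then every left (respectively right) cellular
pair is strongly left (respectively right) cellular. -/
theorem prop_strongly (h : Hecke cs 𝔄 φ H) [Finite W]
    (a : W → 𝔄) (ha : h.IsAFun Set.univ a)
    (hP4 : h.ConjP4 Set.univ a) (hP9 : h.ConjP9 Set.univ a)
    (δ : W → W) (μ : W → ℤ) :
    (h.IsLeftCellularPair Set.univ δ μ → h.IsStronglyLeftCellularPair Set.univ δ μ) ∧
    (h.IsRightCellularPair Set.univ δ μ → h.IsStronglyRightCellularPair Set.univ δ μ) :=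
  prop_strongly_general h δ μ

end Hecke

end CellsCacti
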